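/- arXiv:2202.02525 — 2 statements merged into one kernel-verified Lean document; each statement's English description precedes it below -/
import Mathlib

section
/- The set of parameters λ > 0 for which the generalized Chern–Simons equation Δu = λ e^u (e^u − 1)^5 + 4π Σ_{s=1}^N δ_{p_s} has a solution is upward closed: if the equation has a solution for λ_0 > 0 and λ ≥ λ_0, then it has a solution for λ. -/
/-!
The `λ₀`-solution `u` is nonpositive by the maximum principle, and since the nonlinearity
`g(t) = eᵗ (eᵗ - 1)⁵` is nonpositive for `t ≤ 0`, it is a subsolution of the `λ`-equation for
every `λ ≥ λ₀`; the constant `0` is a supersolution. With `K = 6λ` the map `t ↦ K t - λ g(t)` is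
increasing on `(-∞, 0]`, and `K - Δ` is invertible with order-preserving inverse (again by the
maximum principle). Hence `v ↦ (K - Δ)⁻¹ (K v - λ g(v) - 4π Σ δ_{p_s})` is a monotone self-map of
the order interval `[u, 0]`, a complete lattice, and Tarski's theorem yields a fixed point, which
solves the `λ`-equation.
-/

open Real

/-- The graph Laplacian: `Δu(x) = (1/μ(x)) Σ_y w(x,y)(u(y) − u(x))`. -/
noncomputable def lapl {V : Type*} [Fintype V] (μ : V → ℝ) (w : V → V → ℝ) (u : V → ℝ) (x : V) : ℝ :=
  (1 / μ x) * ∑ y, w x y * (u y - u x)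

/-- The integral on the graph: `∫_V f dμ = Σ_x μ(x) f(x)`. -/
noncomputable def integ {V : Type*} [Fintype V] (μ : V → ℝ) (f : V → ℝ) : ℝ := ∑ x, μ x * f x

/-- The volume of the graph: `Vol(V) = Σ_x μ(x)`. -/
noncomputable def vol {V : Type*} [Fintype V] (μ : V → ℝ) : ℝ := ∑ x, μ x

/-- The Dirac mass at `p`. -/
noncomputable def dirac {V : Type*} [DecidableEq V] (μ : V → ℝ) (p x : V) : ℝ :=
  if x = p then 1 / μ p else 0

/-- The squared length of the gradient: `|∇u|²(x) = (1/(2μ(x))) Σ_y w(x,y)(u(y) − u(x))²`. -/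
noncomputable def gradSq {V : Type*} [Fintype V] (μ : V → ℝ) (w : V → V → ℝ) (u : V → ℝ) (x : V) : ℝ :=
  (1 / (2 * μ x)) * ∑ y, w x y * (u y - u x) ^ 2

/-- The gradient form `Γ(u,φ)(x) = (1/(2μ(x))) Σ_y w(x,y)(u(y) − u(x))(φ(y) − φ(x))`. -/
noncomputable def gamma {V : Type*} [Fintype V] (μ : V → ℝ) (w : V → V → ℝ) (u φ : V → ℝ) (x : V) : ℝ :=
  (1 / (2 * μ x)) * ∑ y, w x y * (u y - u x) * (φ y - φ x)

/-- `u` solves the generalized Chern–Simons equation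
    `Δu = λ e^u (e^u − 1)^5 + 4π Σ_s δ_{p_s}` with parameter `lam`. -/
noncomputable def isSol {V : Type*} [Fintype V] [DecidableEq V] (μ : V → ℝ) (w : V → V → ℝ)
    {N : ℕ} (p : Fin N → V) (lam : ℝ) (u : V → ℝ) : Prop :=
  ∀ x, lapl μ w u x =
    lam * Real.exp (u x) * (Real.exp (u x) - 1) ^ 5 + 4 * π * ∑ s, dirac μ (p s) x

/-- The energy functional
    `I_λ(v) = ∫_V [ (1/2)|∇v|² + (λ/6)(e^{u₀+v} − 1)^6 + (4πN/Vol(V)) v ] dμ`. -/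
noncomputable def energy {V : Type*} [Fintype V] (μ : V → ℝ) (w : V → V → ℝ)
    (u0 : V → ℝ) (N : ℕ) (lam : ℝ) (v : V → ℝ) : ℝ :=
  integ μ (fun x => (1 / 2) * gradSq μ w v x
    + (lam / 6) * (Real.exp (u0 x + v x) - 1) ^ 6 + (4 * π * N / vol μ) * v x)

/-- The Sobolev `W^{1,2}` norm `(∫_V (|∇v|² + v²) dμ)^{1/2}`. -/
noncomputable def sobNorm {V : Type*} [Fintype V] (μ : V → ℝ) (w : V → V → ℝ)
    (v : V → ℝ) : ℝ :=
  Real.sqrt (integ μ (fun x => gradSq μ w v x + v x ^ 2))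

/-- The derivative of the energy functional at `v` in direction `φ`:
    `∫_V Γ(v,φ) dμ + λ ∫_V e^{u₀+v}(e^{u₀+v} − 1)^5 φ dμ + (4πN/Vol(V)) ∫_V φ dμ`. -/
noncomputable def dEnergy {V : Type*} [Fintype V] (μ : V → ℝ) (w : V → V → ℝ)
    (u0 : V → ℝ) (N : ℕ) (lam : ℝ) (v φ : V → ℝ) : ℝ :=
  integ μ (gamma μ w v φ)
    + lam * integ μ (fun x => Real.exp (u0 x + v x) * (Real.exp (u0 x + v x) - 1) ^ 5 * φ x)
    + (4 * π * N / vol μ) * integ μ φ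

open Set Function

theorem exists_isFixedPt_of_mapsTo_Icc {α : Type*} [ConditionallyCompleteLattice α] {a b : α}
    (hab : a ≤ b) {f : α → α} (hmaps : MapsTo f (Icc a b) (Icc a b))
    (hf : MonotoneOn f (Icc a b)) : ∃ x ∈ Icc a b, IsFixedPt f x := by
  have : Fact (a ≤ b) := ⟨hab⟩
  let g : Icc a b →o Icc a b := ⟨hmaps.restrict, fun x y hxy => hf x.2 y.2 hxy⟩
  exact ⟨g.lfp, g.lfp.2, congrArg Subtype.val g.isFixedPt_lfp⟩

noncomputable def csNonlin (t : ℝ) : ℝ := exp t * (exp t - 1) ^ 5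

theorem csNonlin_nonpos_iff {t : ℝ} : csNonlin t ≤ 0 ↔ t ≤ 0 := by
  rw [← not_lt, ← not_lt, csNonlin, mul_pos_iff_of_pos_left (exp_pos t),
    Odd.pow_pos_iff (by decide), sub_pos, one_lt_exp_iff]

theorem hasDerivAt_csNonlin (t : ℝ) :
    HasDerivAt csNonlin (exp t * (exp t - 1) ^ 4 * (6 * exp t - 1)) t := by
  refine ((hasDerivAt_exp t).fun_mul (((hasDerivAt_exp t).sub_const 1).fun_pow 5)).congr_deriv ?_
  norm_num
  ring

theorem monotoneOn_six_mul_sub_csNonlin : MonotoneOn (fun t => 6 * t - csNonlin t) (Iic 0) := by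
  refine monotoneOn_of_hasDerivWithinAt_nonneg (convex_Iic 0)
    (fun t _ => (((hasDerivAt_id t).const_mul 6).sub (hasDerivAt_csNonlin t)).continuousAt
      |>.continuousWithinAt)
    (fun t _ => (((hasDerivAt_id t).const_mul 6).sub (hasDerivAt_csNonlin t)).hasDerivWithinAt)
    fun t ht => ?_
  rw [interior_Iic] at ht
  have hs : 0 < exp t := exp_pos t
  have hs1 : exp t ≤ 1 := exp_le_one_iff.mpr ht.le
  -- `eᵗ (eᵗ - 1)⁴ ∈ [0, 1]` and `6 eᵗ - 1 ≤ 5`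
  have hfac : exp t * (exp t - 1) ^ 4 ≤ 1 := by
    have : (exp t - 1) ^ 4 ≤ 1 := by
      rw [← neg_sub, Even.neg_pow (by decide)]
      exact pow_le_one₀ (by linarith) (by linarith)
    exact mul_le_one₀ hs1 (by positivity) this
  have hfac0 : 0 ≤ exp t * (exp t - 1) ^ 4 := by positivity
  simp only [mul_one]
  nlinarith

section Graph

variable {V : Type*} [Fintype V] (μ : V → ℝ) (w : V → V → ℝ)

theorem lapl_nonneg_of_forall_ge (hmu : ∀ x, 0 < μ x) (hnn : ∀ x y, 0 ≤ w x y) {u : V → ℝ}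
    {x : V} (hx : ∀ y, u x ≤ u y) : 0 ≤ lapl μ w u x :=
  mul_nonneg (one_div_pos.mpr (hmu x)).le
    (Finset.sum_nonneg fun y _ => mul_nonneg (hnn x y) (sub_nonneg.mpr (hx y)))

theorem lapl_nonpos_of_forall_le (hmu : ∀ x, 0 < μ x) (hnn : ∀ x y, 0 ≤ w x y) {u : V → ℝ}
    {x : V} (hx : ∀ y, u y ≤ u x) : lapl μ w u x ≤ 0 :=
  mul_nonpos_of_nonneg_of_nonpos (one_div_pos.mpr (hmu x)).le
    (Finset.sum_nonpos fun y _ => mul_nonpos_of_nonneg_of_nonpos (hnn x y) (sub_nonpos.mpr (hx y)))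

noncomputable def laplLinear : (V → ℝ) →ₗ[ℝ] V → ℝ where
  toFun := lapl μ w
  map_add' u v := by
    ext x
    simp only [lapl, Pi.add_apply, ← mul_add, ← Finset.sum_add_distrib]
    congr 1
    exact Finset.sum_congr rfl fun y _ => by ring
  map_smul' c u := by
    ext x
    show 1 / μ x * ∑ y, w x y * (c * u y - c * u x) = c * (1 / μ x * ∑ y, w x y * (u y - u x))
    rw [mul_left_comm c, Finset.mul_sum _ _ c]
    congr 1
    exact Finset.sum_congr rfl fun y _ => by ring

noncomputable def shiftedLapl (K : ℝ) : (V → ℝ) →ₗ[ℝ] V → ℝ :=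
  K • LinearMap.id - laplLinear μ w

theorem shiftedLapl_apply (K : ℝ) (u : V → ℝ) (x : V) :
    shiftedLapl μ w K u x = K * u x - lapl μ w u x :=
  rfl

theorem nonneg_of_shiftedLapl_nonneg (hmu : ∀ x, 0 < μ x) (hnn : ∀ x y, 0 ≤ w x y) {K : ℝ}
    (hK : 0 < K) {u : V → ℝ} (hu : 0 ≤ shiftedLapl μ w K u) : 0 ≤ u := by
  intro x
  have : Nonempty V := ⟨x⟩
  obtain ⟨x₀, hx₀⟩ := Finite.exists_min u
  have hΔ := lapl_nonneg_of_forall_ge μ w hmu hnn hx₀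
  have hKu := hu x₀
  rw [Pi.zero_apply, shiftedLapl_apply] at hKu
  exact (nonneg_of_mul_nonneg_right (by linarith) hK).trans (hx₀ x)

theorem le_of_shiftedLapl_le (hmu : ∀ x, 0 < μ x) (hnn : ∀ x y, 0 ≤ w x y) {K : ℝ} (hK : 0 < K)
    {u v : V → ℝ} (h : shiftedLapl μ w K u ≤ shiftedLapl μ w K v) : u ≤ v :=
  sub_nonneg.mp <| nonneg_of_shiftedLapl_nonneg μ w hmu hnn hK <| by
    rw [map_sub]
    exact sub_nonneg.mpr h

theorem shiftedLapl_surjective (hmu : ∀ x, 0 < μ x) (hnn : ∀ x y, 0 ≤ w x y) {K : ℝ}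
    (hK : 0 < K) : Surjective (shiftedLapl μ w K) :=
  LinearMap.injective_iff_surjective.mp fun _ _ huv =>
    (le_of_shiftedLapl_le μ w hmu hnn hK huv.le).antisymm
      (le_of_shiftedLapl_le μ w hmu hnn hK huv.ge)

theorem exists_lapl_eq_of_sub_super (hmu : ∀ x, 0 < μ x) (hnn : ∀ x y, 0 ≤ w x y)
    {F : V → ℝ → ℝ} {K : ℝ} (hK : 0 < K) {lo hi : V → ℝ} (hlohi : lo ≤ hi)
    (hF : ∀ x, MonotoneOn (fun t => K * t - F x t) (Icc (lo x) (hi x)))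
    (hlo : ∀ x, F x (lo x) ≤ lapl μ w lo x) (hhi : ∀ x, lapl μ w hi x ≤ F x (hi x)) :
    ∃ u ∈ Icc lo hi, ∀ x, lapl μ w u x = F x (u x) := by
  have hG : MonotoneOn (fun v x => K * v x - F x (v x)) (Icc lo hi) :=
    fun a ha b hb hab x => hF x ⟨ha.1 x, ha.2 x⟩ ⟨hb.1 x, hb.2 x⟩ (hab x)
  -- `T v = (K - Δ)⁻¹ (K v - F(·, v))`, whose fixed points are the solutions
  choose T hT using fun v : V → ℝ =>
    shiftedLapl_surjective μ w hmu hnn hK fun x => K * v x - F x (v x)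
  have hTmono : MonotoneOn T (Icc lo hi) := fun a ha b hb hab =>
    le_of_shiftedLapl_le μ w hmu hnn hK (by rw [hT, hT]; exact hG ha hb hab)
  have hTmaps : MapsTo T (Icc lo hi) (Icc lo hi) := by
    refine fun v hv => ⟨le_of_shiftedLapl_le μ w hmu hnn hK ?_,
      le_of_shiftedLapl_le μ w hmu hnn hK ?_⟩
    · rw [hT]
      refine le_trans (fun x => ?_) (hG (left_mem_Icc.2 hlohi) hv hv.1)
      rw [shiftedLapl_apply]
      linarith [hlo x]
    · rw [hT]
      refine (hG hv (right_mem_Icc.2 hlohi) hv.2).trans (fun x => ?_)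
      rw [shiftedLapl_apply]
      linarith [hhi x]
  obtain ⟨u, hu, hfix⟩ := exists_isFixedPt_of_mapsTo_Icc hlohi hTmaps hTmono
  refine ⟨u, hu, fun x => ?_⟩
  have hx := congrFun (hT u) x
  rw [hfix.eq, shiftedLapl_apply] at hx
  linarith

end Graph

theorem vortex_source_nonneg {V : Type*} [DecidableEq V] {μ : V → ℝ} (hmu : ∀ x, 0 < μ x)
    {N : ℕ} (p : Fin N → V) (x : V) : 0 ≤ 4 * π * ∑ s, dirac μ (p s) x := by
  refine mul_nonneg (by positivity) (Finset.sum_nonneg fun s _ => ?_)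
  unfold dirac
  split_ifs
  exacts [(one_div_pos.mpr (hmu _)).le, le_rfl]

section ChernSimons

variable {V : Type*} [Fintype V] [DecidableEq V] {μ : V → ℝ} {w : V → V → ℝ} {N : ℕ}
  {p : Fin N → V}

theorem isSol_iff {lam : ℝ} {u : V → ℝ} :
    isSol μ w p lam u ↔
      ∀ x, lapl μ w u x = lam * csNonlin (u x) + 4 * π * ∑ s, dirac μ (p s) x := by
  simp only [isSol, csNonlin, mul_assoc]

theorem isSol_nonpos (hmu : ∀ x, 0 < μ x) (hnn : ∀ x y, 0 ≤ w x y) {lam : ℝ} (hlam : 0 < lam)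
    {u : V → ℝ} (hu : isSol μ w p lam u) : u ≤ 0 := by
  intro x
  have : Nonempty V := ⟨x⟩
  obtain ⟨x₀, hx₀⟩ := Finite.exists_max u
  have hΔ := lapl_nonpos_of_forall_le μ w hmu hnn hx₀
  have hsrc := vortex_source_nonneg hmu p x₀
  have hg : lam * csNonlin (u x₀) ≤ 0 := by linarith [isSol_iff.mp hu x₀]
  exact (hx₀ x).trans (csNonlin_nonpos_iff.mp (nonpos_of_mul_nonpos_right hg hlam))

end ChernSimons

theorem solvable_upward_closed_general {V : Type*} [Fintype V] [DecidableEq V]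
    (w : V → V → ℝ) (μ : V → ℝ)
    (hnn : ∀ x y, 0 ≤ w x y)
    (hmu : ∀ x, 0 < μ x)
    (N : ℕ) (p : Fin N → V)
    (lam0 lam : ℝ) (hlam0 : 0 < lam0) (hle : lam0 ≤ lam)
    (u : V → ℝ) (hu : isSol μ w p lam0 u) :
    ∃ u' : V → ℝ, isSol μ w p lam u' := by
  have hlam : 0 < lam := hlam0.trans_le hle
  have hu0 : u ≤ 0 := isSol_nonpos hmu hnn hlam0 hu
  have hsrc := vortex_source_nonneg hmu p
  obtain ⟨u', -, hu'⟩ := exists_lapl_eq_of_sub_super μ w hmu hnn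
    (F := fun x t => lam * csNonlin t + 4 * π * ∑ s, dirac μ (p s) x)
    (by positivity : 0 < 6 * lam) hu0
    (fun x a ha b hb hab => by
      have := mul_le_mul_of_nonneg_left (monotoneOn_six_mul_sub_csNonlin ha.2 hb.2 hab) hlam.le
      dsimp only
      linarith)
    (fun x => by
      rw [isSol_iff.mp hu x]
      linarith [mul_le_mul_of_nonpos_right hle (csNonlin_nonpos_iff.mpr (hu0 x))])
    (fun x => by simp [lapl, csNonlin, hsrc x])
  exact ⟨u', isSol_iff.mpr hu'⟩

/-- the set of parameters `λ > 0` for which the generalized Chern–Simons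
equation has a solution is upward closed. -/
theorem solvable_upward_closed {V : Type*} [Fintype V] [DecidableEq V] [Nonempty V]
    (w : V → V → ℝ) (μ : V → ℝ)
    (hsymm : ∀ x y, w x y = w y x) (hnn : ∀ x y, 0 ≤ w x y)
    (hconn : ∀ x y : V, Relation.ReflTransGen (fun a b => 0 < w a b) x y)
    (hmu : ∀ x, 0 < μ x)
    (N : ℕ) (hN : 1 ≤ N) (p : Fin N → V) (hp : Function.Injective p)
    (lam0 lam : ℝ) (hlam0 : 0 < lam0) (hle : lam0 ≤ lam)
    (u : V → ℝ) (hu : isSol μ w p lam0 u) :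
    ∃ u' : V → ℝ, isSol μ w p lam u' :=
  solvable_upward_closed_general w μ hnn hmu N p lam0 lam hlam0 hle u hu
end

section
/- There exists λ̂ ≥ (6^6/5^5)·(4πN/Vol(V)) such that for every λ > λ̂ there is a solution v_λ of the reduced equation Δv = λ e^{u_0+v}(e^{u_0+v} − 1)^5 + 4πN/Vol(V) which is a local minimum point of the functional I_λ with respect to the norm ‖v‖ = (∫_V (|∇v|² + v²) dμ)^{1/2}. -/
open Real

/-!
Minimise `I_λ` over the compact box `-log 6 ≤ u₀ + v ≤ 0`; `-log 6` is where
`s ↦ eˢ (eˢ - 1)⁵` attains its minimum `-5⁵/6⁶`. Varying the minimiser in one coordinate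
direction gives the Euler–Lagrange equation as an inequality at every vertex where `v` is off the
corresponding face of the box.

The minimiser touches neither face. Where `u = u₀ + v` reaches the upper face `u = 0` the
nonlinearity vanishes, so `Δu ≥ 4π Σₛ δ_{pₛ} ≥ 0` at this maximum of `u`; the strong maximum
principle on the connected graph then forces `u ≡ 0`, which fails at a vortex `pₛ`. Where `u`
reaches the lower face, `Δu ≥ 0` at this minimum of `u`, while the inequality gives
`Δu ≤ 4π/μ(x) - λ 5⁵/6⁶ < 0` as soon as `λ > (6⁶/5⁵)(4πN/Vol(V) + 4π Σ_y 1/μ(y))`.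

Hence the minimiser solves the equation, and since the `W^{1,2}` norm controls every coordinate
(`√μ(x) |v(x)| ≤ ‖v‖`), a small `W^{1,2}`-ball around it lies in the box.
-/

open Finset Filter Topology

section GraphCalculus

variable {V : Type*} [Fintype V] (μ : V → ℝ) (w : V → V → ℝ)

lemma lapl_add (u v : V → ℝ) (x : V) :
    lapl μ w (u + v) x = lapl μ w u x + lapl μ w v x := by
  simp only [lapl, Pi.add_apply, ← mul_add, ← sum_add_distrib]
  congr 1
  exact sum_congr rfl fun y _ => by ring

lemma lapl_const (a : ℝ) (x : V) : lapl μ w (fun _ => a) x = 0 := by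
  simp [lapl]

lemma integ_gamma_eq_neg_integ_lapl_mul (hsymm : ∀ x y, w x y = w y x) (hμ : ∀ x, μ x ≠ 0)
    (u φ : V → ℝ) :
    integ μ (gamma μ w u φ) = -integ μ (fun x => lapl μ w u x * φ x) := by
  have hswap : ∑ x, ∑ y, w x y * (u y - u x) * φ y
      = -∑ x, ∑ y, w x y * (u y - u x) * φ x := by
    rw [sum_comm, ← sum_neg_distrib]
    refine sum_congr rfl fun x _ => ?_
    rw [← sum_neg_distrib]
    exact sum_congr rfl fun y _ => by rw [hsymm]; ring
  have hgamma : ∀ x, μ x * gamma μ w u φ x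
      = (∑ y, w x y * (u y - u x) * φ y - ∑ y, w x y * (u y - u x) * φ x) / 2 := by
    intro x
    simp only [gamma, ← sum_sub_distrib]
    field_simp [hμ x]
  have hlapl : ∀ x, μ x * (lapl μ w u x * φ x) = ∑ y, w x y * (u y - u x) * φ x := by
    intro x
    rw [← sum_mul, lapl]
    field_simp [hμ x]
  simp only [integ, hgamma, hlapl, ← sum_div, sum_sub_distrib, hswap]
  ring

lemma lapl_nonneg_of_forall_le (hnn : ∀ x y, 0 ≤ w x y) {x : V} (hμ : 0 ≤ μ x)
    {u : V → ℝ} (hmin : ∀ y, u x ≤ u y) : 0 ≤ lapl μ w u x :=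
  mul_nonneg (by positivity)
    (sum_nonneg fun y _ => mul_nonneg (hnn x y) (sub_nonneg.2 (hmin y)))

lemma eq_of_forall_le_of_lapl_nonneg (hnn : ∀ x y, 0 ≤ w x y) (hμ : ∀ x, 0 < μ x)
    (hconn : ∀ x y : V, Relation.ReflTransGen (fun a b => 0 < w a b) x y)
    {u : V → ℝ} {M : ℝ} (hle : ∀ x, u x ≤ M)
    (hsub : ∀ x, u x = M → 0 ≤ lapl μ w u x)
    {x₀ : V} (hx₀ : u x₀ = M) (x : V) : u x = M := by
  have hstep : ∀ a b, u a = M → 0 < w a b → u b = M := by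
    intro a b ha hab
    have hterm : ∀ y ∈ univ, w a y * (u y - u a) ≤ 0 := fun y _ =>
      mul_nonpos_of_nonneg_of_nonpos (hnn a y) (by linarith [hle y])
    have hsum : ∑ y, w a y * (u y - u a) = 0 :=
      le_antisymm (sum_nonpos hterm)
        (nonneg_of_mul_nonneg_right (hsub a ha) (one_div_pos.2 (hμ a)))
    have hb := (sum_eq_zero_iff_of_nonpos hterm).1 hsum b (mem_univ b)
    rcases mul_eq_zero.1 hb with h | h
    · exact absurd h hab.ne'
    · linarith
  induction hconn x₀ x with
  | refl => exact hx₀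
  | tail _ hab ih => exact hstep _ _ ih hab

end GraphCalculus

section Dirac

variable {V : Type*} [DecidableEq V] (μ : V → ℝ) {N : ℕ} (p : Fin N → V)

lemma dirac_nonneg (hμ : ∀ x, 0 ≤ μ x) (q x : V) : 0 ≤ dirac μ q x := by
  unfold dirac
  split_ifs <;> simp [hμ]

lemma sum_dirac_le (hp : Function.Injective p) {x : V} (hμ : 0 ≤ μ x) :
    ∑ s, dirac μ (p s) x ≤ 1 / μ x := by
  simp only [dirac]
  by_cases hx : x ∈ Set.range p
  · obtain ⟨s₀, rfl⟩ := hx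
    rw [Fintype.sum_eq_single s₀ fun s hs => if_neg fun h => hs (hp h).symm]
    simp
  · rw [Fintype.sum_eq_zero _ fun s => if_neg fun h => hx ⟨s, h.symm⟩]
    positivity

lemma sum_dirac_pos (hμ : ∀ x, 0 < μ x) (s₀ : Fin N) : 0 < ∑ s, dirac μ (p s) (p s₀) :=
  sum_pos' (fun s _ => dirac_nonneg μ (fun x => (hμ x).le) _ _)
    ⟨s₀, mem_univ _, by simp [dirac, hμ]⟩

end Dirac

section BoundaryPoints

variable {V : Type*} [Fintype V] [DecidableEq V] (μ : V → ℝ) (w : V → V → ℝ) {N : ℕ}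
  (p : Fin N → V) {u0 : V → ℝ} {c : ℝ}

lemma add_lt_of_forall_eq_imp_le_lapl (hnn : ∀ x y, 0 ≤ w x y) (hμ : ∀ x, 0 < μ x)
    (hconn : ∀ x y : V, Relation.ReflTransGen (fun a b => 0 < w a b) x y) (s₀ : Fin N)
    (hu0 : ∀ x, lapl μ w u0 x = -c + 4 * π * ∑ s, dirac μ (p s) x)
    {v : V → ℝ} {M : ℝ} (hle : ∀ x, u0 x + v x ≤ M)
    (hv : ∀ x, u0 x + v x = M → c ≤ lapl μ w v x)
    (x : V) : u0 x + v x < M := by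
  have hsub : ∀ x, (u0 + v) x = M →
      4 * π * ∑ s, dirac μ (p s) x ≤ lapl μ w (u0 + v) x := by
    intro x hx
    rw [lapl_add, hu0]
    linarith [hv x hx]
  refine (hle x).lt_of_ne fun hx => ?_
  have hδ : ∀ x, 0 ≤ 4 * π * ∑ s, dirac μ (p s) x := fun x =>
    mul_nonneg (by positivity) (sum_nonneg fun s _ => dirac_nonneg μ (fun x => (hμ x).le) _ _)
  have hconst : u0 + v = fun _ => M := funext <| eq_of_forall_le_of_lapl_nonneg μ w hnn hμ hconn
    hle (fun x hx => (hδ x).trans (hsub x hx)) hx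
  have hp₀ := hsub (p s₀) (congrFun hconst _)
  rw [hconst, lapl_const] at hp₀
  linarith [mul_pos (by positivity : (0 : ℝ) < 4 * π) (sum_dirac_pos μ p hμ s₀)]

lemma lt_add_of_forall_eq_imp_lapl_le (hnn : ∀ x y, 0 ≤ w x y) (hμ : ∀ x, 0 < μ x)
    (hp : Function.Injective p)
    (hu0 : ∀ x, lapl μ w u0 x = -c + 4 * π * ∑ s, dirac μ (p s) x)
    {v : V → ℝ} {m K : ℝ} (hK : ∀ x, 4 * π / μ x < K) (hge : ∀ x, m ≤ u0 x + v x)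
    (hv : ∀ x, u0 x + v x = m → lapl μ w v x ≤ c - K) (x : V) : m < u0 x + v x := by
  refine (hge x).lt_of_ne fun hx => ?_
  have hmin : 0 ≤ lapl μ w (u0 + v) x :=
    lapl_nonneg_of_forall_le μ w hnn (hμ x).le fun y => hx.symm.le.trans (hge y)
  rw [lapl_add, hu0] at hmin
  have hδ := mul_le_mul_of_nonneg_left (sum_dirac_le μ p hp (hμ x).le)
    (by positivity : (0 : ℝ) ≤ 4 * π)
  rw [mul_one_div] at hδ
  linarith [hv x hx.symm, hK x]

end BoundaryPoints

lemma nonneg_of_isMinOn_Icc_of_hasDerivAt {g : ℝ → ℝ} {d : ℝ}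
    (hmin : IsMinOn g (Set.Icc 0 1) 0) (hg : HasDerivAt g d 0) : 0 ≤ d := by
  have hcone : (1 : ℝ) ∈ posTangentConeAt (Set.Icc 0 1) 0 :=
    mem_posTangentConeAt_of_segment_subset (by simp [segment_eq_Icc])
  simpa using hmin.localize.hasFDerivWithinAt_nonneg hg.hasFDerivAt.hasFDerivWithinAt hcone

lemma Function.update_sub_self {ι G : Type*} [DecidableEq ι] [AddGroup G] (v : ι → G) (i : ι)
    (b : G) : Function.update v i b - v = Pi.single i (b - v i) := by
  ext j
  by_cases hj : j = i <;> simp [hj]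

lemma Function.update_mem_Icc {ι α : Type*} [DecidableEq ι] [Preorder α] {a b v : ι → α}
    (hv : v ∈ Set.Icc a b) {i : ι} {t : α} (ht : t ∈ Set.Icc (a i) (b i)) :
    Function.update v i t ∈ Set.Icc a b := by
  constructor <;> intro j <;> by_cases hj : j = i <;> simp [hj, ht.1, ht.2, hv.1 j, hv.2 j]

section Energy

variable {V : Type*} [Fintype V] (μ : V → ℝ) (w : V → V → ℝ) (u0 : V → ℝ) (N : ℕ)
  (lam : ℝ)

lemma continuous_energy : Continuous (energy μ w u0 N lam) := by
  unfold energy integ gradSq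
  fun_prop

lemma gradSq_add_smul (v φ : V → ℝ) (t : ℝ) (x : V) :
    gradSq μ w (v + t • φ) x
      = gradSq μ w v x + 2 * t * gamma μ w v φ x + t ^ 2 * gradSq μ w φ x := by
  simp only [gradSq, gamma, Pi.add_apply, Pi.smul_apply, smul_eq_mul, mul_sum, ← sum_add_distrib]
  exact sum_congr rfl fun y _ => by ring

lemma hasDerivAt_energy_add_smul (v φ : V → ℝ) :
    HasDerivAt (fun t : ℝ => energy μ w u0 N lam (v + t • φ))
      (dEnergy μ w u0 N lam v φ) 0 := by
  set c := 4 * π * N / vol μ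
  have hterm : ∀ x, HasDerivAt (fun t : ℝ => μ x * ((1 / 2) * gradSq μ w (v + t • φ) x
      + (lam / 6) * (Real.exp (u0 x + (v + t • φ) x) - 1) ^ 6 + c * (v + t • φ) x))
      (μ x * (gamma μ w v φ x
        + lam * (Real.exp (u0 x + v x) * (Real.exp (u0 x + v x) - 1) ^ 5 * φ x)
        + c * φ x)) 0 := by
    intro x
    simp only [gradSq_add_smul, Pi.add_apply, Pi.smul_apply, smul_eq_mul]
    have hline : HasDerivAt (fun t : ℝ => v x + t * φ x) (φ x) 0 := by
      simpa using ((hasDerivAt_id (0 : ℝ)).mul_const (φ x)).const_add (v x)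
    have hgrad : HasDerivAt (fun t : ℝ => gradSq μ w v x + 2 * t * gamma μ w v φ x
        + t ^ 2 * gradSq μ w φ x) (2 * gamma μ w v φ x) 0 := by
      refine ((((hasDerivAt_id (0 : ℝ)).const_mul 2).mul_const _).const_add _ |>.add
        ((hasDerivAt_pow 2 (0 : ℝ)).mul_const _)).congr_deriv ?_
      simp
    have hexp := (((hline.const_add (u0 x)).exp.sub_const 1).fun_pow 6).const_mul (lam / 6)
    refine ((((hgrad.const_mul (1 / 2)).fun_add hexp).fun_add
      (hline.const_mul c)).const_mul (μ x)).congr_deriv ?_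
    simp only [zero_mul, add_zero]
    ring
  refine (HasDerivAt.fun_sum (u := univ) fun x _ => hterm x).congr_deriv ?_
  simp only [dEnergy, integ, mul_sum, ← sum_add_distrib]
  exact sum_congr rfl fun x _ => by ring

lemma dEnergy_nonneg_of_isMinOn {S : Set (V → ℝ)} (hS : Convex ℝ S) {v y : V → ℝ}
    (hmin : IsMinOn (energy μ w u0 N lam) S v) (hv : v ∈ S) (hy : y ∈ S) :
    0 ≤ dEnergy μ w u0 N lam v (y - v) := by
  refine nonneg_of_isMinOn_Icc_of_hasDerivAt (fun t ht => ?_)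
    (hasDerivAt_energy_add_smul μ w u0 N lam v (y - v))
  simpa using hmin (hS.add_smul_sub_mem hv hy ht)

lemma dEnergy_single [DecidableEq V] (hsymm : ∀ x y, w x y = w y x) (hμ : ∀ x, μ x ≠ 0)
    (v : V → ℝ) (x₀ : V) (t : ℝ) :
    dEnergy μ w u0 N lam v (Pi.single x₀ t) = t * μ x₀ * (-lapl μ w v x₀
      + lam * Real.exp (u0 x₀ + v x₀) * (Real.exp (u0 x₀ + v x₀) - 1) ^ 5
      + 4 * π * N / vol μ) := by
  rw [dEnergy, integ_gamma_eq_neg_integ_lapl_mul μ w hsymm hμ]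
  simp only [integ, Pi.single_apply, mul_ite, mul_zero, sum_ite_eq', mem_univ, ↓reduceIte]
  ring

lemma lapl_le_of_isMinOn_Icc [DecidableEq V] (hsymm : ∀ x y, w x y = w y x)
    (hμ : ∀ x, 0 < μ x) {a b v : V → ℝ} (hmin : IsMinOn (energy μ w u0 N lam) (Set.Icc a b) v)
    (hv : v ∈ Set.Icc a b)
    {x₀ : V} (hx₀ : v x₀ < b x₀) :
    lapl μ w v x₀ ≤ lam * Real.exp (u0 x₀ + v x₀) * (Real.exp (u0 x₀ + v x₀) - 1) ^ 5
      + 4 * π * N / vol μ := by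
  have h := dEnergy_nonneg_of_isMinOn μ w u0 N lam (convex_Icc a b) hmin hv
    (Function.update_mem_Icc hv ⟨hv.1 x₀ |>.trans hx₀.le, le_rfl⟩)
  rw [Function.update_sub_self, dEnergy_single μ w u0 N lam hsymm fun x => (hμ x).ne'] at h
  have := nonneg_of_mul_nonneg_right h (mul_pos (sub_pos.2 hx₀) (hμ x₀))
  linarith

lemma le_lapl_of_isMinOn_Icc [DecidableEq V] (hsymm : ∀ x y, w x y = w y x)
    (hμ : ∀ x, 0 < μ x) {a b v : V → ℝ} (hmin : IsMinOn (energy μ w u0 N lam) (Set.Icc a b) v)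
    (hv : v ∈ Set.Icc a b)
    {x₀ : V} (hx₀ : a x₀ < v x₀) :
    lam * Real.exp (u0 x₀ + v x₀) * (Real.exp (u0 x₀ + v x₀) - 1) ^ 5 + 4 * π * N / vol μ
      ≤ lapl μ w v x₀ := by
  have h := dEnergy_nonneg_of_isMinOn μ w u0 N lam (convex_Icc a b) hmin hv
    (Function.update_mem_Icc hv ⟨le_rfl, hx₀.le.trans (hv.2 x₀)⟩)
  rw [Function.update_sub_self, dEnergy_single μ w u0 N lam hsymm fun x => (hμ x).ne'] at h
  have := nonpos_of_mul_nonneg_right h (mul_neg_of_neg_of_pos (sub_neg.2 hx₀) (hμ x₀))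
  linarith

end Energy

section SobolevNorm

variable {V : Type*} [Fintype V] (μ : V → ℝ) (w : V → V → ℝ)

lemma gradSq_nonneg (hnn : ∀ x y, 0 ≤ w x y) {x : V} (hμ : 0 ≤ μ x) (u : V → ℝ) :
    0 ≤ gradSq μ w u x :=
  mul_nonneg (by positivity) (sum_nonneg fun y _ => mul_nonneg (hnn x y) (sq_nonneg _))

lemma sqrt_mul_abs_le_sobNorm (hnn : ∀ x y, 0 ≤ w x y) (hμ : ∀ x, 0 ≤ μ x) (v : V → ℝ)
    (x : V) :
    √(μ x) * |v x| ≤ sobNorm μ w v := by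
  rw [← Real.sqrt_sq_eq_abs, ← Real.sqrt_mul (hμ x)]
  refine Real.sqrt_le_sqrt ?_
  have hterm : ∀ y ∈ univ, 0 ≤ μ y * (gradSq μ w v y + v y ^ 2) := fun y _ =>
    mul_nonneg (hμ y) (add_nonneg (gradSq_nonneg μ w hnn (hμ y) v) (sq_nonneg _))
  calc μ x * v x ^ 2 ≤ μ x * (gradSq μ w v x + v x ^ 2) :=
        mul_le_mul_of_nonneg_left (le_add_of_nonneg_left (gradSq_nonneg μ w hnn (hμ x) v)) (hμ x)
    _ ≤ integ μ (fun x => gradSq μ w v x + v x ^ 2) := single_le_sum hterm (mem_univ x)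

lemma exists_pos_forall_sobNorm_le_abs_lt (hnn : ∀ x y, 0 ≤ w x y) (hμ : ∀ x, 0 < μ x)
    {δ : V → ℝ} (hδ : ∀ x, 0 < δ x) :
    ∃ ε > 0, ∀ v, sobNorm μ w v ≤ ε → ∀ x, |v x| < δ x := by
  have hsmall : ∀ᶠ ε in 𝓝[>] (0 : ℝ), ∀ x, ε < √(μ x) * δ x :=
    eventually_all.2 fun x => nhdsWithin_le_nhds <|
      eventually_lt_nhds (mul_pos (Real.sqrt_pos.2 (hμ x)) (hδ x))
  obtain ⟨ε, hε, hεpos⟩ := (hsmall.and self_mem_nhdsWithin).exists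
  refine ⟨ε, hεpos, fun v hv x => ?_⟩
  have h := (sqrt_mul_abs_le_sobNorm μ w hnn (fun x => (hμ x).le) v x).trans_lt
    (hv.trans_lt (hε x))
  exact lt_of_mul_lt_mul_left h (Real.sqrt_nonneg _)

lemma exists_sobNorm_ball_isMinOn_of_isMinOn_Icc (hnn : ∀ x y, 0 ≤ w x y)
    (hμ : ∀ x, 0 < μ x) {F : (V → ℝ) → ℝ} {a b v : V → ℝ}
    (hmin : IsMinOn F (Set.Icc a b) v)
    (hint : ∀ x, a x < v x ∧ v x < b x) :
    ∃ ε > 0, ∀ v', sobNorm μ w (fun x => v' x - v x) ≤ ε → F v ≤ F v' := by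
  obtain ⟨ε, hε, hball⟩ := exists_pos_forall_sobNorm_le_abs_lt μ w hnn hμ
    (δ := fun x => min (v x - a x) (b x - v x)) fun x => by simp [(hint x).1, (hint x).2]
  refine ⟨ε, hε, fun v' hv' => hmin ⟨fun x => ?_, fun x => ?_⟩⟩ <;>
  · have := abs_lt.1 (hball _ hv' x)
    simp only [lt_min_iff] at this
    linarith [min_le_left (v x - a x) (b x - v x), min_le_right (v x - a x) (b x - v x)]

end SobolevNorm

lemma exp_neg_log_six_mul :
    Real.exp (-Real.log 6) * (Real.exp (-Real.log 6) - 1) ^ 5 = -(5 ^ 5 / 6 ^ 6) := by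
  rw [Real.exp_neg, Real.exp_log (by norm_num)]
  norm_num

lemma forall_lt_and_lt_of_isMinOn_energy {V : Type*} [Fintype V] [DecidableEq V]
    {w : V → V → ℝ} {μ : V → ℝ} (hsymm : ∀ x y, w x y = w y x) (hnn : ∀ x y, 0 ≤ w x y)
    (hconn : ∀ x y : V, Relation.ReflTransGen (fun a b => 0 < w a b) x y) (hμ : ∀ x, 0 < μ x)
    {N : ℕ} {p : Fin N → V} (s₀ : Fin N) (hp : Function.Injective p) {u0 : V → ℝ}
    (hu0 : ∀ x, lapl μ w u0 x = -(4 * π * N / vol μ) + 4 * π * ∑ s, dirac μ (p s) x)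
    {lam : ℝ} (hlam : ∀ x, 4 * π / μ x < lam * (5 ^ 5 / 6 ^ 6)) {vl : V → ℝ}
    (hmin : IsMinOn (energy μ w u0 N lam) (Set.Icc (fun x => -Real.log 6 - u0 x) (-u0)) vl)
    (hvl : vl ∈ Set.Icc (fun x => -Real.log 6 - u0 x) (-u0)) :
    ∀ x, -Real.log 6 - u0 x < vl x ∧ vl x < -u0 x := by
  have hlog6 : 0 < Real.log 6 := Real.log_pos (by norm_num)
  have hlower : ∀ x, -Real.log 6 - u0 x ≤ vl x := hvl.1
  have hupper : ∀ x, vl x ≤ -u0 x := hvl.2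
  have hlt : ∀ x, u0 x + vl x < 0 := add_lt_of_forall_eq_imp_le_lapl μ w p hnn hμ hconn s₀ hu0
    (fun x => by linarith [hupper x]) fun x hx => by
      simpa [hx] using le_lapl_of_isMinOn_Icc μ w u0 N lam hsymm hμ hmin hvl
        (show -Real.log 6 - u0 x < vl x by linarith)
  have hgt : ∀ x, -Real.log 6 < u0 x + vl x :=
    lt_add_of_forall_eq_imp_lapl_le μ w p hnn hμ hp hu0 hlam (fun x => by linarith [hlower x])
      fun x hx => by
        have := lapl_le_of_isMinOn_Icc μ w u0 N lam hsymm hμ hmin hvl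
          (show vl x < -u0 x by linarith)
        rw [hx, mul_assoc, exp_neg_log_six_mul] at this
        linarith
  exact fun x => ⟨by linarith [hgt x], by linarith [hlt x]⟩

theorem local_minimum_solution_general {V : Type*} [Fintype V] [DecidableEq V]
    (w : V → V → ℝ) (μ : V → ℝ)
    (hsymm : ∀ x y, w x y = w y x) (hnn : ∀ x y, 0 ≤ w x y)
    (hconn : ∀ x y : V, Relation.ReflTransGen (fun a b => 0 < w a b) x y)
    (hmu : ∀ x, 0 < μ x)
    (N : ℕ) (hN : 1 ≤ N) (p : Fin N → V) (hp : Function.Injective p)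
    (u0 : V → ℝ)
    (hu0 : ∀ x, lapl μ w u0 x = -(4 * π * N / vol μ) + 4 * π * ∑ s, dirac μ (p s) x) :
    ∃ lamhat : ℝ,
      lamhat ≥ (6 ^ 6 / 5 ^ 5) * (4 * π * N / vol μ) ∧
      ∀ lam : ℝ, lam > lamhat → ∃ vl : V → ℝ,
        (∀ x, lapl μ w vl x =
          lam * Real.exp (u0 x + vl x) * (Real.exp (u0 x + vl x) - 1) ^ 5 + 4 * π * N / vol μ) ∧
        ∃ ε : ℝ, 0 < ε ∧ ∀ v : V → ℝ,
          sobNorm μ w (fun x => v x - vl x) ≤ ε →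
          energy μ w u0 N lam vl ≤ energy μ w u0 N lam v := by
  have hinv : ∀ y, 0 ≤ 1 / μ y := fun y => (one_div_pos.2 (hmu y)).le
  have hinv_le : ∀ x, 4 * π / μ x ≤ 4 * π * ∑ y, 1 / μ y := fun x => by
    rw [← mul_one_div]
    gcongr
    exact single_le_sum (fun y _ => hinv y) (mem_univ x)
  have hc : 0 ≤ 4 * π * N / vol μ :=
    div_nonneg (by positivity) (sum_nonneg fun x _ => (hmu x).le)
  refine ⟨6 ^ 6 / 5 ^ 5 * (4 * π * N / vol μ + 4 * π * ∑ y, 1 / μ y),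
    mul_le_mul_of_nonneg_left
      (le_add_of_nonneg_right (mul_nonneg (by positivity) (sum_nonneg fun y _ => hinv y)))
      (by norm_num),
    fun lam hlam => ?_⟩
  obtain ⟨vl, hvl, hmin⟩ :=
    (isCompact_Icc (a := fun x => -Real.log 6 - u0 x) (b := -u0)).exists_isMinOn
      (Set.nonempty_Icc.2 fun x => by simp [(Real.log_pos (by norm_num : (1 : ℝ) < 6)).le])
      (continuous_energy μ w u0 N lam).continuousOn
  have hint := forall_lt_and_lt_of_isMinOn_energy hsymm hnn hconn hmu ⟨0, hN⟩ hp hu0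
    (fun x => by nlinarith [hinv_le x]) hmin hvl
  refine ⟨vl, fun x => le_antisymm ?_ ?_,
    exists_sobNorm_ball_isMinOn_of_isMinOn_Icc μ w hnn hmu hmin hint⟩
  · exact lapl_le_of_isMinOn_Icc μ w u0 N lam hsymm hmu hmin hvl (hint x).2
  · exact le_lapl_of_isMinOn_Icc μ w u0 N lam hsymm hmu hmin hvl (hint x).1

/-- there exists `λ̂ ≥ (6^6/5^5)·(4πN/Vol(V))` such that for every
`λ > λ̂` the reduced equation has a solution `v_λ` which is a local minimum point of
`I_λ` for the `W^{1,2}` norm. -/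
theorem local_minimum_solution {V : Type*} [Fintype V] [DecidableEq V] [Nonempty V]
    (w : V → V → ℝ) (μ : V → ℝ)
    (hsymm : ∀ x y, w x y = w y x) (hnn : ∀ x y, 0 ≤ w x y)
    (hconn : ∀ x y : V, Relation.ReflTransGen (fun a b => 0 < w a b) x y)
    (hmu : ∀ x, 0 < μ x)
    (N : ℕ) (hN : 1 ≤ N) (p : Fin N → V) (hp : Function.Injective p)
    (u0 : V → ℝ)
    (hu0 : ∀ x, lapl μ w u0 x = -(4 * π * N / vol μ) + 4 * π * ∑ s, dirac μ (p s) x) :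
    ∃ lamhat : ℝ,
      lamhat ≥ (6 ^ 6 / 5 ^ 5) * (4 * π * N / vol μ) ∧
      ∀ lam : ℝ, lam > lamhat → ∃ vl : V → ℝ,
        (∀ x, lapl μ w vl x =
          lam * Real.exp (u0 x + vl x) * (Real.exp (u0 x + vl x) - 1) ^ 5 + 4 * π * N / vol μ) ∧
        ∃ ε : ℝ, 0 < ε ∧ ∀ v : V → ℝ,
          sobNorm μ w (fun x => v x - vl x) ≤ ε →
          energy μ w u0 N lam vl ≤ energy μ w u0 N lam v :=
  local_minimum_solution_general w μ hsymm hnn hconn hmu N hN p hp u0 hu0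
end
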